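/- Let k be a positive integer and J ⊊ I two squarefree monomial ideals of S = K[x_1,…,x_n]. Then sdepth_n(I/J) ≥ k if and only if the poset P_{I∖J} of squarefree monomials in I∖J, ordered by divisibility, admits a partition into disjoint intervals P_{I∖J} = ⊔_{i=1}^l [u_i, v_i] such that deg(v_i) ≥ k for all i. -/

import Mathlib

noncomputable section

open MvPolynomial

/-- The total degree of an exponent vector. -/
def edeg {n : ℕ} (a : Fin n →₀ ℕ) : ℕ := ∑ i, a i

/-- An exponent vector is squarefree if every exponent is at most 1. -/
def IsSqfree {n : ℕ} (a : Fin n →₀ ℕ) : Prop := ∀ i, a i ≤ 1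

/-- The set of exponent vectors of monomials belonging to the ideal `I`. -/
def expSet {K : Type} [Field K] {n : ℕ} (I : Ideal (MvPolynomial (Fin n) K)) :
    Set (Fin n →₀ ℕ) := {a | (monomial a (1 : K)) ∈ I}

/-- `I` is generated by monomials `x^a` with `a` satisfying the predicate `P`. -/
def GenBy {K : Type} [Field K] {n : ℕ} (I : Ideal (MvPolynomial (Fin n) K))
    (P : (Fin n →₀ ℕ) → Prop) : Prop :=
  ∃ G : Set (Fin n →₀ ℕ), (∀ a ∈ G, P a) ∧
    I = Ideal.span ((fun a => (monomial a (1 : K))) '' G)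

/-- `I` is a monomial ideal. -/
def IsMonomialIdeal {K : Type} [Field K] {n : ℕ} (I : Ideal (MvPolynomial (Fin n) K)) : Prop :=
  GenBy I fun _ => True

/-- `I` is a squarefree monomial ideal. -/
def IsSqfreeMonomialIdeal {K : Type} [Field K] {n : ℕ}
    (I : Ideal (MvPolynomial (Fin n) K)) : Prop := GenBy I IsSqfree

/-- `x^a >_lex x^b` in the lexicographic order with `x_1 > x_2 > ⋯ > x_n`. -/
def lexGT {n : ℕ} (a b : Fin n →₀ ℕ) : Prop :=
  ∃ i : Fin n, (∀ j : Fin n, j < i → a j = b j) ∧ b i < a i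

/-- `I` is a lexsegment ideal. -/
def IsLexsegment {K : Type} [Field K] {n : ℕ} (I : Ideal (MvPolynomial (Fin n) K)) : Prop :=
  IsMonomialIdeal I ∧ ∀ a b : Fin n →₀ ℕ, (monomial a (1 : K)) ∈ I → edeg b = edeg a →
    lexGT b a → (monomial b (1 : K)) ∈ I

/-- `I` is a squarefree lexsegment ideal. -/
def IsSqfreeLexsegment {K : Type} [Field K] {n : ℕ}
    (I : Ideal (MvPolynomial (Fin n) K)) : Prop :=
  IsSqfreeMonomialIdeal I ∧ ∀ a b : Fin n →₀ ℕ, IsSqfree a → IsSqfree b →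
    (monomial a (1 : K)) ∈ I → edeg b = edeg a → lexGT b a → (monomial b (1 : K)) ∈ I

/-- The minimal number of generators of an ideal. -/
def mu {K : Type} [Field K] {n : ℕ} (I : Ideal (MvPolynomial (Fin n) K)) : ℕ :=
  sInf {m | ∃ G : Finset (MvPolynomial (Fin n) K), G.card = m ∧ I = Ideal.span (G : Set _)}

/-- `ξ_k = ∑_{j=1}^k C(2j-1, j)`. -/
def xi (k : ℕ) : ℕ := ∑ j ∈ Finset.Icc 1 k, (2 * j - 1).choose j

/-- The Hilbert function of `I`: the `K`-dimension of the degree-`j` component of `I`. -/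
def hilb {K : Type} [Field K] {n : ℕ} (I : Ideal (MvPolynomial (Fin n) K)) (j : ℕ) : ℕ :=
  Module.finrank K ↥((Submodule.restrictScalars K I) ⊓ homogeneousSubmodule (Fin n) K j)

/-- The Hilbert function of `I` extended to all integer degrees. -/
def hilbZ {K : Type} [Field K] {n : ℕ} (I : Ideal (MvPolynomial (Fin n) K)) (j : ℤ) : ℕ :=
  if 0 ≤ j then hilb I j.toNat else 0

/-- The Hilbert function of a standard graded polynomial ring in `d` variables,
at degree `t ∈ ℤ`. -/
def polyHilb (d : ℕ) (t : ℤ) : ℕ :=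
  if t < 0 then 0 else if d = 0 then (if t = 0 then 1 else 0) else (t.toNat + (d - 1)).choose (d - 1)

/-- A (standard graded) Hilbert decomposition of `I` all of whose retracts are polynomial
rings in at least `k` variables: `I ≅ ⊕ᵢ Sᵢ(-sᵢ)` as graded `K`-vector spaces, where `Sᵢ`
is a graded algebra retract of `S`, i.e. a polynomial ring in `dd i ≥ k` variables. -/
def HilbertDecomp1 {K : Type} [Field K] {n : ℕ} (I : Ideal (MvPolynomial (Fin n) K))
    (k : ℕ) : Prop :=
  ∃ (ι : Type) (_ : Fintype ι) (dd : ι → ℕ) (s : ι → ℤ),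
    (∀ i, k ≤ dd i) ∧ ∀ j : ℤ, hilbZ I j = ∑ i, polyHilb (dd i) (j - s i)

/-- The Hilbert depth of `I` in the standard graded sense. -/
def hdepth1 {K : Type} [Field K] {n : ℕ} (I : Ideal (MvPolynomial (Fin n) K)) : ℕ∞ :=
  sSup {k : ℕ∞ | ∃ m : ℕ, HilbertDecomp1 I m ∧ k = m}

/-- The set of exponent vectors `u + ℕ^Z`, corresponding to the Stanley space `x^u K[Z]`. -/
def cone {n : ℕ} (u : Fin n →₀ ℕ) (Z : Finset (Fin n)) : Set (Fin n →₀ ℕ) :=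
  {a | (∀ j, u j ≤ a j) ∧ ∀ j ∉ Z, a j = u j}

/-- A Stanley decomposition, with all Stanley spaces of dimension at least `k`, of the
`ℤⁿ`-graded module whose monomial basis has exponent set `A`. -/
def StanleyPartN {n : ℕ} (A : Set (Fin n →₀ ℕ)) (k : ℕ) : Prop :=
  ∃ (ι : Type) (_ : Fintype ι) (u : ι → (Fin n →₀ ℕ)) (Z : ι → Finset (Fin n)),
    (∀ i, k ≤ (Z i).card) ∧ (∀ i, cone (u i) (Z i) ⊆ A) ∧
    (∀ a ∈ A, ∃! i, a ∈ cone (u i) (Z i))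

/-- The multigraded Stanley depth of the `ℤⁿ`-graded module whose monomial basis has
exponent set `A`. -/
def sdepthN {n : ℕ} (A : Set (Fin n →₀ ℕ)) : ℕ∞ :=
  sSup {k : ℕ∞ | ∃ m : ℕ, StanleyPartN A m ∧ k = m}

/-- A multigraded Hilbert decomposition of the monomial ideal `I`, with all retracts
polynomial rings in at least `k` variables: the multigraded Hilbert function of `I`
(which takes values 0 and 1) equals the sum of the multigraded Hilbert functions of
the shifted retracts `x^{u i} K[Z i]`. -/
def HilbertDecompN {K : Type} [Field K] {n : ℕ} (I : Ideal (MvPolynomial (Fin n) K))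
    (k : ℕ) : Prop :=
  ∃ (ι : Type) (_ : Fintype ι) (u : ι → (Fin n →₀ ℕ)) (Z : ι → Finset (Fin n)),
    (∀ i, k ≤ (Z i).card) ∧
    (∀ a : Fin n →₀ ℕ, (a ∈ expSet I ↔ ∃ i, a ∈ cone (u i) (Z i)) ∧
      (∀ i i', a ∈ cone (u i) (Z i) → a ∈ cone (u i') (Z i') → i = i'))

/-- The multigraded Hilbert depth of a monomial ideal `I`. -/
def hdepthN {K : Type} [Field K] {n : ℕ} (I : Ideal (MvPolynomial (Fin n) K)) : ℕ∞ :=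
  sSup {k : ℕ∞ | ∃ m : ℕ, HilbertDecompN I m ∧ k = m}

/-- The graded maximal ideal `(x_1, …, x_n)`. -/
def maxIdeal (K : Type) [Field K] (n : ℕ) : Ideal (MvPolynomial (Fin n) K) :=
  Ideal.span (Set.range X)

/-- The depth of a module `M` over `S = K[x_1,…,x_n]` with respect to the graded maximal
ideal: the supremum of lengths of `M`-regular sequences in `(x_1,…,x_n)`. -/
def mdepth (K : Type) [Field K] (n : ℕ) (M : Type)
    [AddCommGroup M] [Module (MvPolynomial (Fin n) K) M] : ℕ∞ :=
  sSup {k : ℕ∞ | ∃ rs : List (MvPolynomial (Fin n) K),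
    (∀ r ∈ rs, r ∈ maxIdeal K n) ∧ RingTheory.Sequence.IsRegular M rs ∧ k = rs.length}

/-- The quotient module `I/J` for ideals `J ≤ I`. -/
def quotMod {K : Type} [Field K] {n : ℕ} (I J : Ideal (MvPolynomial (Fin n) K)) : Type :=
  ↥I ⧸ (Submodule.comap (Submodule.subtype I) J)

instance {K : Type} [Field K] {n : ℕ} (I J : Ideal (MvPolynomial (Fin n) K)) :
    AddCommGroup (quotMod I J) := by unfold quotMod; infer_instance

instance {K : Type} [Field K] {n : ℕ} (I J : Ideal (MvPolynomial (Fin n) K)) :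
    Module (MvPolynomial (Fin n) K) (quotMod I J) := by unfold quotMod; infer_instance

/-- `ρ_j(I\J)`: the number of squarefree monomials of degree `j` in `I ∖ J`. -/
def rho {K : Type} [Field K] {n : ℕ} (I J : Ideal (MvPolynomial (Fin n) K)) (j : ℕ) : ℕ :=
  Set.ncard {a : Fin n →₀ ℕ | IsSqfree a ∧ edeg a = j ∧ a ∈ expSet I ∧ a ∉ expSet J}

/-- `ρ_j(I)`: the number of squarefree monomials of degree `j` in `I`. -/
def rhoI {K : Type} [Field K] {n : ℕ} (I : Ideal (MvPolynomial (Fin n) K)) (j : ℕ) : ℕ :=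
  Set.ncard {a : Fin n →₀ ℕ | IsSqfree a ∧ edeg a = j ∧ a ∈ expSet I}

/-- `I` is a stable monomial ideal. Here `j` plays the role of `m(u)`, the largest index of
a variable dividing `u = x^a`. -/
def IsStable {K : Type} [Field K] {n : ℕ} (I : Ideal (MvPolynomial (Fin n) K)) : Prop :=
  IsMonomialIdeal I ∧ ∀ a : Fin n →₀ ℕ, (monomial a (1 : K)) ∈ I →
    ∀ j : Fin n, a j ≠ 0 → (∀ l, j < l → a l = 0) → ∀ i, i < j →
      (monomial (a + Finsupp.single i 1 - Finsupp.single j 1) (1 : K)) ∈ I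

/-- `I` is a squarefree stable monomial ideal. -/
def IsSqfreeStable {K : Type} [Field K] {n : ℕ} (I : Ideal (MvPolynomial (Fin n) K)) : Prop :=
  IsSqfreeMonomialIdeal I ∧ ∀ a : Fin n →₀ ℕ, IsSqfree a → (monomial a (1 : K)) ∈ I →
    ∀ j : Fin n, a j ≠ 0 → (∀ l, j < l → a l = 0) → ∀ i, i < j → a i = 0 →
      (monomial (a + Finsupp.single i 1 - Finsupp.single j 1) (1 : K)) ∈ I

/-- `I` is a squarefree strongly stable monomial ideal. -/
def IsSqfreeStronglyStable {K : Type} [Field K] {n : ℕ}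
    (I : Ideal (MvPolynomial (Fin n) K)) : Prop :=
  IsSqfreeMonomialIdeal I ∧ ∀ a : Fin n →₀ ℕ, IsSqfree a → (monomial a (1 : K)) ∈ I →
    ∀ i : Fin n, a i ≠ 0 → ∀ j, j < i → a j = 0 →
      (monomial (a + Finsupp.single j 1 - Finsupp.single i 1) (1 : K)) ∈ I

/-- The exponent vectors of the minimal monomial generators of a monomial ideal:
the monomials of `I` minimal with respect to divisibility. -/
def minGens {K : Type} [Field K] {n : ℕ} (I : Ideal (MvPolynomial (Fin n) K)) :
    Set (Fin n →₀ ℕ) := {a | a ∈ expSet I ∧ ∀ b ∈ expSet I, b ≤ a → b = a}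

/-- `m(u)`: the largest index (1-based) of a variable dividing `x^a`; `0` if `a = 0`. -/
def mvar {n : ℕ} (a : Fin n →₀ ℕ) : ℕ := a.support.sup (fun i => (i : ℕ) + 1)

/-- `m(I) = max { m(u) : u ∈ G(I) }`. -/
def mIdeal {K : Type} [Field K] {n : ℕ} (I : Ideal (MvPolynomial (Fin n) K)) : ℕ :=
  sSup {m | ∃ a ∈ minGens I, m = mvar a}

open MvPolynomial

/-- The `K`-subspace `Aᵢ·xᵢ` of `S`, where `Aᵢ` is the subalgebra generated by `B`. -/
def stSpace {K : Type} [Field K] {n : ℕ} (B : Finset (MvPolynomial (Fin n) K))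
    (x : MvPolynomial (Fin n) K) : Submodule K (MvPolynomial (Fin n) K) :=
  (Subalgebra.toSubmodule (Algebra.adjoin K (B : Set (MvPolynomial (Fin n) K)))).map
    (LinearMap.mulLeft K x)

/-- A standard graded Stanley decomposition of the ideal `I` with all Stanley spaces of
depth at least `k`: a finite family of graded algebra retracts `Sᵢ = K[Bᵢ]` (generated by
`k ≤ |Bᵢ|` linearly independent linear forms) and homogeneous elements `xᵢ ∈ I` with
`Sᵢ ∩ ann(xᵢ) = 0`, such that `I = ⊕ᵢ Sᵢ xᵢ` as graded `K`-vector spaces. -/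
def StanleyDecomp1 {K : Type} [Field K] {n : ℕ} (I : Ideal (MvPolynomial (Fin n) K))
    (k : ℕ) : Prop :=
  ∃ (ι : Type) (_ : Fintype ι) (B : ι → Finset (MvPolynomial (Fin n) K))
    (x : ι → MvPolynomial (Fin n) K) (d : ι → ℕ),
      (∀ i, ∀ b ∈ B i, b ∈ homogeneousSubmodule (Fin n) K 1) ∧
      (∀ i, LinearIndependent K (fun b : (B i : Set (MvPolynomial (Fin n) K)) =>
        (b : MvPolynomial (Fin n) K))) ∧
      (∀ i, k ≤ (B i).card) ∧
      (∀ i, x i ∈ I) ∧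
      (∀ i, x i ∈ homogeneousSubmodule (Fin n) K (d i)) ∧
      (∀ i, ∀ a ∈ Algebra.adjoin K ((B i : Set (MvPolynomial (Fin n) K))),
        a * x i = 0 → a = 0) ∧
      (iSup (fun i => stSpace (B i) (x i)) = Submodule.restrictScalars K I) ∧
      (iSupIndep fun i => stSpace (B i) (x i))

/-- The standard graded Stanley depth of `I`. -/
def sdepth1 {K : Type} [Field K] {n : ℕ} (I : Ideal (MvPolynomial (Fin n) K)) : ℕ∞ :=
  sSup {k : ℕ∞ | ∃ m : ℕ, StanleyDecomp1 I m ∧ k = m}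

/-- The subspace `S₁ · V` of `S`. -/
def mulS1 {K : Type} [Field K] {n : ℕ} (V : Submodule K (MvPolynomial (Fin n) K)) :
    Submodule K (MvPolynomial (Fin n) K) :=
  Submodule.span K {p | ∃ l ∈ homogeneousSubmodule (Fin n) K 1, ∃ v ∈ V, p = l * v}

/-- A lexsegment set of monomials of degree `d`. -/
def IsLexSet {n : ℕ} (d : ℕ) (L : Set (Fin n →₀ ℕ)) : Prop :=
  (∀ a ∈ L, edeg a = d) ∧ ∀ a ∈ L, ∀ b : Fin n →₀ ℕ, edeg b = d → lexGT b a → b ∈ L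

/-- `V ⊆ S_d` is a Gotzmann space: `dim_K (S₁·V) = dim_K (S₁·lex(V))`, where `lex(V)` is
spanned by the lexsegment set of monomials of degree `d` of cardinality `dim_K V`. -/
def IsGotzmannSpace {K : Type} [Field K] {n : ℕ} (d : ℕ)
    (V : Submodule K (MvPolynomial (Fin n) K)) : Prop :=
  ∃ L : Finset (Fin n →₀ ℕ), IsLexSet (n := n) d (L : Set (Fin n →₀ ℕ)) ∧ L.card = Module.finrank K ↥V ∧
    Module.finrank K ↥(mulS1 V) =
      Module.finrank K ↥(mulS1 (Submodule.span K
        ((fun a => (monomial a (1 : K))) '' (L : Set (Fin n →₀ ℕ)))))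

/-- `I` is a homogeneous ideal in the standard grading. -/
def IsHomogeneousIdeal {K : Type} [Field K] {n : ℕ}
    (I : Ideal (MvPolynomial (Fin n) K)) : Prop :=
  ∀ p ∈ I, ∀ k : ℕ, homogeneousComponent k p ∈ I

/-- `I` is a Gotzmann ideal: each homogeneous component `I_k` is a Gotzmann space. -/
def IsGotzmannIdeal {K : Type} [Field K] {n : ℕ}
    (I : Ideal (MvPolynomial (Fin n) K)) : Prop :=
  IsHomogeneousIdeal I ∧ ∀ k : ℕ,
    IsGotzmannSpace k ((Submodule.restrictScalars K I) ⊓ homogeneousSubmodule (Fin n) K k)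

/-- `I` is generated by homogeneous elements of degree `d`. -/
def GenInDegHomog {K : Type} [Field K] {n : ℕ} (I : Ideal (MvPolynomial (Fin n) K))
    (d : ℕ) : Prop :=
  ∃ G : Set (MvPolynomial (Fin n) K), (∀ g ∈ G, g ∈ homogeneousSubmodule (Fin n) K d) ∧
    I = Ideal.span G

/-
A monomial lies in a squarefree monomial ideal iff its squarefree part does, so `I ∖ J` consists
of the `a` with `sqfreePart a ∈ P_{I∖J}`. A Stanley space `x^u K[Z]` contains squarefree vectors
only if `u` is squarefree, and then these form the interval `[u, x_{supp u ∪ Z}]`, whose top has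
degree at least `|Z|`. Conversely, for an interval `[u, v]` of `P_{I∖J}` the Stanley space
`x^u K[supp v]`, of dimension `deg v`, consists of the `a` with `sqfreePart a ∈ [u, v]`. So
Stanley decompositions of `I/J` into spaces of dimension `≥ k` and partitions of `P_{I∖J}` into
intervals with tops of degree `≥ k` determine each other.
-/

section SqfreeVectors

variable {n : ℕ}

def sqfreeOf (T : Finset (Fin n)) : Fin n →₀ ℕ :=
  ⟨T, fun j => if j ∈ T then 1 else 0, fun j => by by_cases h : j ∈ T <;> simp [h]⟩

lemma sqfreeOf_apply (T : Finset (Fin n)) (j : Fin n) :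
    sqfreeOf T j = if j ∈ T then 1 else 0 := rfl

@[simp]
lemma support_sqfreeOf (T : Finset (Fin n)) : (sqfreeOf T).support = T := rfl

lemma isSqfree_sqfreeOf (T : Finset (Fin n)) : IsSqfree (sqfreeOf T) := fun j => by
  rw [sqfreeOf_apply]; split_ifs <;> omega

lemma IsSqfree.of_le {u a : Fin n →₀ ℕ} (ha : IsSqfree a) (hua : u ≤ a) : IsSqfree u :=
  fun j => (hua j).trans (ha j)

lemma IsSqfree.le_iff_support_subset {u a : Fin n →₀ ℕ} (hu : IsSqfree u) :
    u ≤ a ↔ u.support ⊆ a.support := by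
  refine ⟨Finsupp.support_mono, fun h j => ?_⟩
  by_cases hj : u j = 0
  · simp [hj]
  · have := Finsupp.mem_support_iff.1 (h (Finsupp.mem_support_iff.2 hj))
    have := hu j
    omega

lemma IsSqfree.le_sqfreeOf_iff {u : Fin n →₀ ℕ} (hu : IsSqfree u) {T : Finset (Fin n)} :
    u ≤ sqfreeOf T ↔ u.support ⊆ T := by
  rw [hu.le_iff_support_subset, support_sqfreeOf]

def sqfreePart (a : Fin n →₀ ℕ) : Fin n →₀ ℕ := sqfreeOf a.support

lemma sqfreePart_le_iff {a v : Fin n →₀ ℕ} : sqfreePart a ≤ v ↔ a.support ⊆ v.support :=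
  (isSqfree_sqfreeOf _).le_iff_support_subset

lemma IsSqfree.le_sqfreePart_iff {u a : Fin n →₀ ℕ} (hu : IsSqfree u) :
    u ≤ sqfreePart a ↔ u ≤ a := by
  rw [sqfreePart, hu.le_sqfreeOf_iff, hu.le_iff_support_subset]

lemma mem_cone_support_iff {u v a : Fin n →₀ ℕ} (huv : u ≤ v) :
    a ∈ cone u v.support ↔ u ≤ a ∧ a.support ⊆ v.support := by
  refine ⟨fun ⟨hua, hfix⟩ => ⟨hua, fun j hj => ?_⟩, fun ⟨hua, hsupp⟩ => ⟨hua, fun j hj => ?_⟩⟩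
  · by_contra hjv
    have := huv j
    simp_all
  · have := huv j
    have : j ∉ a.support := fun h => hj (hsupp h)
    simp_all

lemma IsSqfree.mem_cone_iff {u a : Fin n →₀ ℕ} (ha : IsSqfree a) {Z : Finset (Fin n)} :
    a ∈ cone u Z ↔ u ≤ a ∧ a.support ⊆ u.support ∪ Z := by
  refine ⟨fun ⟨hua, hfix⟩ => ⟨hua, fun j hj => ?_⟩, fun ⟨hua, hsupp⟩ => ⟨hua, fun j hj => ?_⟩⟩
  · by_cases hjZ : j ∈ Z
    · exact Finset.mem_union_right _ hjZ
    · rw [Finsupp.mem_support_iff, hfix j hjZ] at hj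
      exact Finset.mem_union_left _ (Finsupp.mem_support_iff.2 hj)
  · have := hua j
    have := ha j
    by_cases hju : j ∈ u.support
    · rw [Finsupp.mem_support_iff] at hju
      omega
    · have : j ∉ a.support := fun h => by simpa [hju, hj] using hsupp h
      simp_all

end SqfreeVectors

section MonomialIdeals

variable {K : Type} [Field K] {n : ℕ}

lemma isUpperSet_expSet (I : Ideal (MvPolynomial (Fin n) K)) : IsUpperSet (expSet I) :=
  fun _ _ hba hb => I.mem_of_dvd (monomial_dvd_monomial.2 ⟨Or.inr hba, one_dvd _⟩) hb

lemma mem_expSet_span_iff {G : Set (Fin n →₀ ℕ)} {a : Fin n →₀ ℕ} :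
    a ∈ expSet (Ideal.span ((fun g => monomial g (1 : K)) '' G)) ↔ ∃ g ∈ G, g ≤ a := by
  classical
  simp [expSet, mem_ideal_span_monomial_image, support_monomial]

lemma sqfreePart_mem_expSet_iff {I : Ideal (MvPolynomial (Fin n) K)}
    (hI : IsSqfreeMonomialIdeal I) {a : Fin n →₀ ℕ} : sqfreePart a ∈ expSet I ↔ a ∈ expSet I := by
  obtain ⟨G, hG, rfl⟩ := hI
  simp only [mem_expSet_span_iff]
  exact exists_congr fun g => and_congr_right fun hg => (hG g hg).le_sqfreePart_iff

end MonomialIdeals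

section IntervalPartitions

variable {n : ℕ}

lemma StanleyPartN.mono {A : Set (Fin n →₀ ℕ)} {k m : ℕ} (h : StanleyPartN A m) (hkm : k ≤ m) :
    StanleyPartN A k :=
  let ⟨ι, hι, u, Z, hcard, hsub, huniq⟩ := h
  ⟨ι, hι, u, Z, fun i => hkm.trans (hcard i), hsub, huniq⟩

lemma le_sdepthN_iff {A : Set (Fin n →₀ ℕ)} {k : ℕ} (hk : 0 < k) :
    (k : ℕ∞) ≤ sdepthN A ↔ StanleyPartN A k := by
  refine ⟨fun h => ?_, fun h => le_sSup ⟨k, h, rfl⟩⟩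
  have hlt : ((k - 1 : ℕ) : ℕ∞) < sdepthN A :=
    lt_of_lt_of_le (by exact_mod_cast Nat.sub_lt hk one_pos) h
  obtain ⟨_, ⟨m, hm, rfl⟩, hkm⟩ := lt_sSup_iff.1 hlt
  have : k - 1 < m := by exact_mod_cast hkm
  exact hm.mono (by omega)

def HasIntervalPartition (A : Set (Fin n →₀ ℕ)) (k : ℕ) : Prop :=
  ∃ (ι : Type) (_ : Fintype ι) (u v : ι → (Fin n →₀ ℕ)),
    (∀ i, IsSqfree (u i) ∧ u i ∈ A) ∧ (∀ i, IsSqfree (v i) ∧ v i ∈ A) ∧ (∀ i, u i ≤ v i) ∧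
    (∀ i, k ≤ (v i).support.card) ∧ (∀ a, IsSqfree a → a ∈ A → ∃! i, u i ≤ a ∧ a ≤ v i)

lemma hasIntervalPartition_iff_fin {A : Set (Fin n →₀ ℕ)} {k : ℕ} :
    HasIntervalPartition A k ↔ ∃ (l : ℕ) (u v : Fin l → (Fin n →₀ ℕ)),
      (∀ i, IsSqfree (u i) ∧ u i ∈ A) ∧ (∀ i, IsSqfree (v i) ∧ v i ∈ A) ∧ (∀ i, u i ≤ v i) ∧
      (∀ i, k ≤ (v i).support.card) ∧ (∀ a, IsSqfree a → a ∈ A → ∃! i, u i ≤ a ∧ a ≤ v i) := by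
  refine ⟨fun ⟨ι, _, u, v, hu, hv, huv, hk, hpart⟩ => ?_,
    fun ⟨l, u, v, h⟩ => ⟨Fin l, inferInstance, u, v, h⟩⟩
  let e := (Fintype.equivFin ι).symm
  exact ⟨_, u ∘ e, v ∘ e, fun i => hu _, fun i => hv _, fun i => huv _, fun i => hk _,
    fun a ha haA => e.symm.existsUnique_congr_left.1 (hpart a ha haA)⟩

theorem hasIntervalPartition_of_stanleyPartN {A : Set (Fin n →₀ ℕ)} {k : ℕ}
    (h : StanleyPartN A k) : HasIntervalPartition A k := by
  obtain ⟨ι, _, u, Z, hcard, hsub, huniq⟩ := h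
  have hu_le_top (i : ι) (hi : IsSqfree (u i)) : u i ≤ sqfreeOf ((u i).support ∪ Z i) :=
    hi.le_sqfreeOf_iff.2 Finset.subset_union_left
  have mem_cone_iff {i : ι} {a : Fin n →₀ ℕ} (ha : IsSqfree a) :
      a ∈ cone (u i) (Z i) ↔ u i ≤ a ∧ a ≤ sqfreeOf ((u i).support ∪ Z i) := by
    rw [ha.mem_cone_iff, ha.le_sqfreeOf_iff]
  classical
  refine ⟨{i // IsSqfree (u i)}, inferInstance, fun i => u i,
    fun i => sqfreeOf ((u i).support ∪ Z i), fun i => ⟨i.2, hsub i ?_⟩,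
    fun i => ⟨isSqfree_sqfreeOf _, hsub i ?_⟩, fun i => hu_le_top i i.2, fun i => ?_,
    fun a ha haA => ?_⟩
  · exact ⟨fun _ => le_rfl, fun _ _ => rfl⟩
  · exact (mem_cone_iff (isSqfree_sqfreeOf _)).2 ⟨hu_le_top i i.2, le_rfl⟩
  · rw [support_sqfreeOf]
    exact (hcard i).trans (Finset.card_le_card Finset.subset_union_right)
  · obtain ⟨i, hai, hi_uniq⟩ := huniq a haA
    refine ⟨⟨i, ha.of_le hai.1⟩, (mem_cone_iff ha).1 hai, fun j hj => Subtype.ext ?_⟩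
    exact hi_uniq j ((mem_cone_iff ha).2 hj)

theorem stanleyPartN_of_hasIntervalPartition {A : Set (Fin n →₀ ℕ)} {k : ℕ}
    (hA : A.OrdConnected) (hsq : ∀ a, sqfreePart a ∈ A ↔ a ∈ A)
    (h : HasIntervalPartition A k) : StanleyPartN A k := by
  obtain ⟨ι, _, u, v, hu, hv, huv, hk, hpart⟩ := h
  have mem_cone_iff {i : ι} {a : Fin n →₀ ℕ} :
      a ∈ cone (u i) (v i).support ↔ u i ≤ sqfreePart a ∧ sqfreePart a ≤ v i := by
    rw [mem_cone_support_iff (huv i), (hu i).1.le_sqfreePart_iff, sqfreePart_le_iff]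
  refine ⟨ι, inferInstance, u, fun i => (v i).support, hk, fun i a ha => ?_, fun a ha => ?_⟩
  · exact (hsq a).1 (hA.out (hu i).2 (hv i).2 (mem_cone_iff.1 ha))
  · exact (existsUnique_congr fun i => mem_cone_iff).2
      (hpart (sqfreePart a) (isSqfree_sqfreeOf _) ((hsq a).2 ha))

end IntervalPartitions

theorem sdepthN_ge_iff_interval_partition_general {K : Type} [Field K] {n : ℕ} (k : ℕ) (hk : 0 < k)
    (I J : Ideal (MvPolynomial (Fin n) K)) (hI : IsSqfreeMonomialIdeal I)
    (hJ : IsSqfreeMonomialIdeal J) :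
    (k : ℕ∞) ≤ sdepthN (expSet I \ expSet J) ↔
      ∃ (l : ℕ) (u v : Fin l → (Fin n →₀ ℕ)),
        (∀ i, IsSqfree (u i) ∧ u i ∈ expSet I ∧ u i ∉ expSet J) ∧
        (∀ i, IsSqfree (v i) ∧ v i ∈ expSet I ∧ v i ∉ expSet J) ∧
        (∀ i, u i ≤ v i) ∧
        (∀ i, k ≤ (v i).support.card) ∧
        (∀ a : Fin n →₀ ℕ, IsSqfree a → a ∈ expSet I → a ∉ expSet J →
          ∃! i, u i ≤ a ∧ a ≤ v i) := by
  have hA : (expSet I \ expSet J).OrdConnected :=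
    (isUpperSet_expSet I).ordConnected.inter (isUpperSet_expSet J).compl.ordConnected
  have hsq (a : Fin n →₀ ℕ) : sqfreePart a ∈ expSet I \ expSet J ↔ a ∈ expSet I \ expSet J := by
    simp only [Set.mem_sdiff, sqfreePart_mem_expSet_iff hI, sqfreePart_mem_expSet_iff hJ]
  rw [le_sdepthN_iff hk]
  refine (Iff.intro hasIntervalPartition_of_stanleyPartN
    (stanleyPartN_of_hasIntervalPartition hA hsq)).trans ?_
  simp only [hasIntervalPartition_iff_fin, Set.mem_sdiff, and_imp]

/-- Lemma 2.1, after Herzog–Vladoiu–Zheng. Let `k` be a positive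
integer and `J ⊊ I` two squarefree monomial ideals of `S = K[x_1,…,x_n]`. Then
`sdepth_n(I/J) ≥ k` if and only if the poset `P_{I∖J}` of squarefree monomials of `I∖J`,
ordered by divisibility, has a partition into disjoint intervals `[u_i, v_i]` with
`|v_i| ≥ k` for all `i`. -/
theorem sdepthN_ge_iff_interval_partition {K : Type} [Field K] {n : ℕ} (k : ℕ) (hk : 0 < k)
    (I J : Ideal (MvPolynomial (Fin n) K)) (hI : IsSqfreeMonomialIdeal I)
    (hJ : IsSqfreeMonomialIdeal J) (hJI : J < I) :
    (k : ℕ∞) ≤ sdepthN (expSet I \ expSet J) ↔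
      ∃ (l : ℕ) (u v : Fin l → (Fin n →₀ ℕ)),
        (∀ i, IsSqfree (u i) ∧ u i ∈ expSet I ∧ u i ∉ expSet J) ∧
        (∀ i, IsSqfree (v i) ∧ v i ∈ expSet I ∧ v i ∉ expSet J) ∧
        (∀ i, u i ≤ v i) ∧
        (∀ i, k ≤ (v i).support.card) ∧
        (∀ a : Fin n →₀ ℕ, IsSqfree a → a ∈ expSet I → a ∉ expSet J →
          ∃! i, u i ≤ a ∧ a ≤ v i) :=
  sdepthN_ge_iff_interval_partition_general k hk I J hI hJ
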